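/- Let R be a commutative strongly ℤ-graded ring with grading 𝒜. Let Y⁻ be an R_{≤0}-module, Y⁰ an R-module, Y⁺ an R_{≥0}-module, υ⁻ : Y⁻ → Y⁰ an R_{≤0}-linear map and υ⁺ : Y⁺ → Y⁰ an R_{≥0}-linear map. For k, ℓ ∈ ℤ define the (k,ℓ)-twisted difference map D_{k,ℓ} : (Y⁻ ⊗[R_{≤0}] R_{≤k}) × (Y⁺ ⊗[R_{≥0}] R_{≥−ℓ}) → Y⁰ by (y ⊗ r, z ⊗ s) ↦ r • υ⁻(y) − s • υ⁺(z). If k, ℓ, k′, ℓ′ ∈ ℤ satisfy k + ℓ = k′ + ℓ′, then the kernel of D_{k,ℓ} is zero if and only if the kernel of D_{k′,ℓ′} is zero, and D_{k,ℓ} is surjective if and only if D_{k′,ℓ′} is surjective. -/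

import Mathlib

/-!
Strong grading gives `1 = ∑ aᵢ bᵢ` with `aᵢ ∈ 𝒜 d` and `bᵢ ∈ 𝒜 (-d)`, where `d = k' - k = l - l'`.
Multiplication by `aᵢ` maps the domain of `D_{k,l}` to that of `D_{k',l'}`, with
`D_{k',l'} (aᵢ x) = aᵢ • D_{k,l} x`, and multiplication by `bᵢ` maps back; `x = ∑ bᵢ aᵢ x`.
Hence if `D_{k',l'}` is injective and `D_{k,l} x = 0`, every `aᵢ x` vanishes and so does `x`;
if `D_{k,l}` is onto and `D_{k,l} xᵢ = bᵢ • w`, then `D_{k',l'} (∑ aᵢ xᵢ) = w`.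
-/

open TensorProduct

universe u

/-- A ℤ-graded ring is *strongly graded* if `𝒜 i * 𝒜 j = 𝒜 (i + j)` for all `i j`. -/
def IsStronglyGraded {R : Type*} [Ring R] (𝒜 : ℤ → Submodule ℤ R) : Prop :=
  ∀ i j : ℤ, 𝒜 i * 𝒜 j = 𝒜 (i + j)

variable {R : Type*} [CommRing R] (𝒜 : ℤ → Submodule ℤ R) [GradedRing 𝒜]

/-- `R_{≤k}`, the sum of the homogeneous components of degree at most `k`. -/
def Rle (k : ℤ) : Submodule ℤ R := ⨆ n ≤ k, 𝒜 n

/-- `R_{≥k}`, the sum of the homogeneous components of degree at least `k`. -/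
def Rge (k : ℤ) : Submodule ℤ R := ⨆ n ≥ k, 𝒜 n

theorem Rle_mul_Rle (a b : ℤ) : Rle 𝒜 a * Rle 𝒜 b ≤ Rle 𝒜 (a + b) := by
  rw [Rle, Rle, Submodule.iSup_mul]
  refine iSup_le fun n => ?_
  rw [Submodule.iSup_mul]
  refine iSup_le fun hn => ?_
  rw [Submodule.mul_iSup]
  refine iSup_le fun m => ?_
  rw [Submodule.mul_iSup]
  refine iSup_le fun hm => ?_
  refine le_trans (Submodule.mul_le.2 fun x hx y hy => SetLike.mul_mem_graded hx hy) ?_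
  exact le_iSup₂_of_le (n + m) (add_le_add hn hm) le_rfl

theorem Rge_mul_Rge (a b : ℤ) : Rge 𝒜 a * Rge 𝒜 b ≤ Rge 𝒜 (a + b) := by
  rw [Rge, Rge, Submodule.iSup_mul]
  refine iSup_le fun n => ?_
  rw [Submodule.iSup_mul]
  refine iSup_le fun hn => ?_
  rw [Submodule.mul_iSup]
  refine iSup_le fun m => ?_
  rw [Submodule.mul_iSup]
  refine iSup_le fun hm => ?_
  refine le_trans (Submodule.mul_le.2 fun x hx y hy => SetLike.mul_mem_graded hx hy) ?_
  exact le_iSup₂_of_le (n + m) (add_le_add hn hm) le_rfl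

theorem grade_mem_Rle {k : ℤ} {x : R} (hx : x ∈ 𝒜 k) : x ∈ Rle 𝒜 k :=
  Submodule.mem_iSup_of_mem k (Submodule.mem_iSup_of_mem le_rfl hx)

theorem grade_mem_Rge {k : ℤ} {x : R} (hx : x ∈ 𝒜 k) : x ∈ Rge 𝒜 k :=
  Submodule.mem_iSup_of_mem k (Submodule.mem_iSup_of_mem le_rfl hx)

/-- The subring `R_{≤0}` of `R`. -/
def RleSubring : Subring R where
  carrier := Rle 𝒜 0
  zero_mem' := zero_mem _
  add_mem' := fun h1 h2 => add_mem h1 h2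
  neg_mem' := fun h => neg_mem h
  one_mem' := grade_mem_Rle 𝒜 (SetLike.one_mem_graded 𝒜)
  mul_mem' := fun h1 h2 => by
    simpa using Rle_mul_Rle 𝒜 0 0 (Submodule.mul_mem_mul h1 h2)

/-- The subring `R_{≥0}` of `R`. -/
def RgeSubring : Subring R where
  carrier := Rge 𝒜 0
  zero_mem' := zero_mem _
  add_mem' := fun h1 h2 => add_mem h1 h2
  neg_mem' := fun h => neg_mem h
  one_mem' := grade_mem_Rge 𝒜 (SetLike.one_mem_graded 𝒜)
  mul_mem' := fun h1 h2 => by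
    simpa using Rge_mul_Rge 𝒜 0 0 (Submodule.mul_mem_mul h1 h2)

/-- The inclusion of the subring `𝒜 0` into `R`. -/
def incl0 : (𝒜 0) →+* R where
  toFun a := (a : R)
  map_one' := rfl
  map_mul' _ _ := rfl
  map_zero' := rfl
  map_add' _ _ := rfl

/-- The inclusion of the subring `𝒜 0` into the subring `R_{≤0}`. -/
def incl0le : (𝒜 0) →+* RleSubring 𝒜 where
  toFun a := ⟨(a : R), grade_mem_Rle 𝒜 a.2⟩
  map_one' := rfl
  map_mul' _ _ := rfl
  map_zero' := rfl
  map_add' _ _ := rfl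

/-- The inclusion of the subring `𝒜 0` into the subring `R_{≥0}`. -/
def incl0ge : (𝒜 0) →+* RgeSubring 𝒜 where
  toFun a := ⟨(a : R), grade_mem_Rge 𝒜 a.2⟩
  map_one' := rfl
  map_mul' _ _ := rfl
  map_zero' := rfl
  map_add' _ _ := rfl

/-- Restriction of scalars along `𝒜 0 → R`. -/
instance restrictFromR (M : Type u) [AddCommMonoid M] [Module R M] :
    Module (𝒜 0) M :=
  Module.compHom M (incl0 𝒜)

/-- Restriction of scalars along `𝒜 0 → R_{≤0}`. -/
instance restrictFromRle (M : Type u) [AddCommMonoid M] [Module (RleSubring 𝒜) M] :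
    Module (𝒜 0) M :=
  Module.compHom M (incl0le 𝒜)

/-- Restriction of scalars along `𝒜 0 → R_{≥0}`. -/
instance restrictFromRge (M : Type u) [AddCommMonoid M] [Module (RgeSubring 𝒜) M] :
    Module (𝒜 0) M :=
  Module.compHom M (incl0ge 𝒜)

/-- Restriction of scalars along `R_{≤0} → R`. -/
instance moduleRleOfR (M : Type u) [AddCommMonoid M] [Module R M] :
    Module (RleSubring 𝒜) M :=
  Module.compHom M (RleSubring 𝒜).subtype

/-- Restriction of scalars along `R_{≥0} → R`. -/
instance moduleRgeOfR (M : Type u) [AddCommMonoid M] [Module R M] :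
    Module (RgeSubring 𝒜) M :=
  Module.compHom M (RgeSubring 𝒜).subtype

/-- The homogeneous component `𝒜 n` is a module over the subring `𝒜 0`,
with the action given by multiplication in `R`. -/
instance gradeLeftModule (n : ℤ) : Module (𝒜 0) (𝒜 n) where
  smul a x := ⟨(a : R) * x, by simpa using SetLike.mul_mem_graded a.2 x.2⟩
  one_smul x := Subtype.ext (one_mul _)
  mul_smul a b x := Subtype.ext (mul_assoc _ _ _)
  smul_zero a := Subtype.ext (mul_zero _)
  smul_add a x y := Subtype.ext (mul_add _ _ _)
  add_smul a b x := Subtype.ext (add_mul _ _ _)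
  zero_smul x := Subtype.ext (zero_mul _)

/-- `R_{≤k}` is a module over the subring `R_{≤0}`, the action being
multiplication in `R`. -/
instance RleModule (k : ℤ) : Module (RleSubring 𝒜) (Rle 𝒜 k) where
  smul s x := ⟨(s : R) * x, by
    simpa using Rle_mul_Rle 𝒜 0 k (Submodule.mul_mem_mul s.2 x.2)⟩
  one_smul x := Subtype.ext (one_mul _)
  mul_smul a b x := Subtype.ext (mul_assoc _ _ _)
  smul_zero a := Subtype.ext (mul_zero _)
  smul_add a x y := Subtype.ext (mul_add _ _ _)
  add_smul a b x := Subtype.ext (add_mul _ _ _)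
  zero_smul x := Subtype.ext (zero_mul _)

/-- `R_{≥k}` is a module over the subring `R_{≥0}`, the action being
multiplication in `R`. -/
instance RgeModule (k : ℤ) : Module (RgeSubring 𝒜) (Rge 𝒜 k) where
  smul s x := ⟨(s : R) * x, by
    simpa using Rge_mul_Rge 𝒜 0 k (Submodule.mul_mem_mul s.2 x.2)⟩
  one_smul x := Subtype.ext (one_mul _)
  mul_smul a b x := Subtype.ext (mul_assoc _ _ _)
  smul_zero a := Subtype.ext (mul_zero _)
  smul_add a x y := Subtype.ext (mul_add _ _ _)
  add_smul a b x := Subtype.ext (add_mul _ _ _)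
  zero_smul x := Subtype.ext (zero_mul _)

theorem Submodule.exists_fin_sum_mul_eq_of_mem_mul {S A : Type*} [CommSemiring S] [Semiring A]
    [Algebra S A] {P Q : Submodule S A} {x : A} (hx : x ∈ P * Q) :
    ∃ (n : ℕ) (a : Fin n → P) (b : Fin n → Q), ∑ i, (a i : A) * b i = x := by
  refine Submodule.mul_induction_on hx
    (fun p hp q hq => ⟨1, fun _ => ⟨p, hp⟩, fun _ => ⟨q, hq⟩, by simp⟩) ?_
  rintro _ _ ⟨n, a, b, rfl⟩ ⟨m, a', b', rfl⟩
  exact ⟨n + m, Fin.append a a', Fin.append b b', by simp [Fin.sum_univ_add]⟩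

theorem TensorProduct.addMonoidHom_ext {S M N Y : Type*} [CommSemiring S] [AddCommMonoid M]
    [AddCommMonoid N] [Module S M] [Module S N] [AddZeroClass Y] {F G : M ⊗[S] N →+ Y}
    (h : ∀ m n, F (m ⊗ₜ n) = G (m ⊗ₜ n)) : F = G := by
  ext x
  induction x using TensorProduct.induction_on with
  | zero => simp
  | tmul m n => exact h m n
  | add x y hx hy => rw [map_add, map_add, hx, hy]

theorem TensorProduct.prod_addMonoidHom_ext {S T M N P Q Y : Type*} [CommSemiring S]
    [CommSemiring T] [AddCommMonoid M] [AddCommMonoid N] [AddCommMonoid P] [AddCommMonoid Q]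
    [Module S M] [Module S N] [Module T P] [Module T Q] [AddCommMonoid Y]
    {F G : (M ⊗[S] N) × (P ⊗[T] Q) →+ Y}
    (h : ∀ m n p q, F (m ⊗ₜ n, p ⊗ₜ q) = G (m ⊗ₜ n, p ⊗ₜ q)) : F = G := by
  have hl : F.comp (.inl _ _) = G.comp (.inl _ _) :=
    addMonoidHom_ext fun m n => by simpa using h m n 0 0
  have hr : F.comp (.inr _ _) = G.comp (.inr _ _) :=
    addMonoidHom_ext fun p q => by simpa using h 0 0 p q
  rw [← AddMonoidHom.coprod_unique F, ← AddMonoidHom.coprod_unique G, hl, hr]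

theorem injective_of_sum_retraction {ι S M N Y : Type*} [Fintype ι] [AddCommGroup M]
    [AddZeroClass N] [AddZeroClass Y] [SMulZeroClass S Y] {f : M →+ Y} {g : N →+ Y}
    (φ : ι → M →+ N) (ψ : ι → N →+ M) (a : ι → S) (hφ : ∀ i x, g (φ i x) = a i • f x)
    (hψφ : ∀ x, ∑ i, ψ i (φ i x) = x) (hg : Function.Injective g) : Function.Injective f := by
  refine (injective_iff_map_eq_zero f).2 fun x hx => ?_
  have hφx : ∀ i, φ i x = 0 := fun i => hg (by rw [hφ, hx, smul_zero, map_zero])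
  rw [← hψφ x]
  simp only [hφx, map_zero, Finset.sum_const_zero]

theorem surjective_of_sum_smul {ι S M N Y : Type*} [Fintype ι] [Semiring S] [AddZeroClass M]
    [AddCommMonoid N] [AddCommMonoid Y] [Module S Y] {f : M →+ Y} {g : N →+ Y}
    (φ : ι → M →+ N) (a b : ι → S) (hφ : ∀ i x, g (φ i x) = a i • f x)
    (hab : ∑ i, a i * b i = 1) (hf : Function.Surjective f) : Function.Surjective g := by
  intro w
  choose x hx using fun i => hf (b i • w)
  refine ⟨∑ i, φ i (x i), ?_⟩
  calc g (∑ i, φ i (x i)) = ∑ i, (a i * b i) • w := by simp only [map_sum, hφ, hx, smul_smul]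
    _ = w := by rw [← Finset.sum_smul, hab, one_smul]

theorem IsStronglyGraded.one_mem_mul_neg {R : Type*} [Ring R] {𝒜 : ℤ → Submodule ℤ R}
    [SetLike.GradedOne 𝒜] (h : IsStronglyGraded 𝒜) (d : ℤ) : (1 : R) ∈ 𝒜 d * 𝒜 (-d) := by
  rw [h, add_neg_cancel]
  exact SetLike.one_mem_graded 𝒜

theorem Rle_mono {R : Type*} [CommRing R] (𝒜 : ℤ → Submodule ℤ R) : Monotone (Rle 𝒜) :=
  fun _ _ h => biSup_mono fun _ hn => hn.trans h

theorem Rge_antitone {R : Type*} [CommRing R] (𝒜 : ℤ → Submodule ℤ R) :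
    Antitone (Rge 𝒜) :=
  fun _ _ h => biSup_mono fun _ hn => h.trans hn

def mulLe {d k k' : ℤ} (hk : k + d ≤ k') (a : R) (ha : a ∈ Rle 𝒜 d) :
    Rle 𝒜 k →ₗ[RleSubring 𝒜] Rle 𝒜 k' where
  toFun r := ⟨r * a, Rle_mono 𝒜 hk (Rle_mul_Rle 𝒜 k d (Submodule.mul_mem_mul r.2 ha))⟩
  map_add' _ _ := Subtype.ext (add_mul _ _ _)
  map_smul' _ _ := Subtype.ext (mul_assoc _ _ _)

def mulGe {d m m' : ℤ} (hm : m' ≤ m + d) (a : R) (ha : a ∈ Rge 𝒜 d) :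
    Rge 𝒜 m →ₗ[RgeSubring 𝒜] Rge 𝒜 m' where
  toFun r := ⟨r * a, Rge_antitone 𝒜 hm (Rge_mul_Rge 𝒜 m d (Submodule.mul_mem_mul r.2 ha))⟩
  map_add' _ _ := Subtype.ext (add_mul _ _ _)
  map_smul' _ _ := Subtype.ext (mul_assoc _ _ _)

@[simp]
theorem coe_mulLe {d k k' : ℤ} (hk : k + d ≤ k') (a : R) (ha : a ∈ Rle 𝒜 d) (r : Rle 𝒜 k) :
    (mulLe 𝒜 hk a ha r : R) = r * a :=
  rfl

@[simp]
theorem coe_mulGe {d m m' : ℤ} (hm : m' ≤ m + d) (a : R) (ha : a ∈ Rge 𝒜 d) (r : Rge 𝒜 m) :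
    (mulGe 𝒜 hm a ha r : R) = r * a :=
  rfl

section TwistedDomain

variable (Yneg Ypos : Type*) [AddCommMonoid Yneg] [AddCommMonoid Ypos]
  [Module (RleSubring 𝒜) Yneg] [Module (RgeSubring 𝒜) Ypos]

abbrev TwistedDomain (k l : ℤ) : Type _ :=
  (Yneg ⊗[RleSubring 𝒜] Rle 𝒜 k) × (Ypos ⊗[RgeSubring 𝒜] Rge 𝒜 (-l))

variable {Yneg Ypos}

def twistShift {d k l k' l' : ℤ} (hk : k + d ≤ k') (hl : -l' ≤ -l + d) (a : R) (ha : a ∈ 𝒜 d) :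
    TwistedDomain 𝒜 Yneg Ypos k l →+ TwistedDomain 𝒜 Yneg Ypos k' l' :=
  .prodMap ((mulLe 𝒜 hk a (grade_mem_Rle 𝒜 ha)).lTensor Yneg).toAddMonoidHom
    ((mulGe 𝒜 hl a (grade_mem_Rge 𝒜 ha)).lTensor Ypos).toAddMonoidHom

theorem twistShift_tmul {d k l k' l' : ℤ} (hk : k + d ≤ k') (hl : -l' ≤ -l + d) (a : R)
    (ha : a ∈ 𝒜 d) (y : Yneg) (r : Rle 𝒜 k) (z : Ypos) (s : Rge 𝒜 (-l)) :
    twistShift 𝒜 hk hl a ha (y ⊗ₜ r, z ⊗ₜ s) =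
      (y ⊗ₜ mulLe 𝒜 hk a (grade_mem_Rle 𝒜 ha) r, z ⊗ₜ mulGe 𝒜 hl a (grade_mem_Rge 𝒜 ha) s) :=
  rfl

theorem map_twistShift {Y : Type*} [AddCommGroup Y] [Module R Y] (υneg : Yneg → Y)
    (υpos : Ypos → Y) {d k l k' l' : ℤ} (hk : k + d ≤ k') (hl : -l' ≤ -l + d) {a : R}
    (ha : a ∈ 𝒜 d) {D : TwistedDomain 𝒜 Yneg Ypos k l →+ Y}
    {D' : TwistedDomain 𝒜 Yneg Ypos k' l' →+ Y}
    (hD : ∀ y r z s, D (y ⊗ₜ r, z ⊗ₜ s) = (r : R) • υneg y - (s : R) • υpos z)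
    (hD' : ∀ y r z s, D' (y ⊗ₜ r, z ⊗ₜ s) = (r : R) • υneg y - (s : R) • υpos z)
    (x : TwistedDomain 𝒜 Yneg Ypos k l) :
    D' (twistShift 𝒜 hk hl a ha x) = a • D x := by
  suffices D'.comp (twistShift 𝒜 hk hl a ha) = (DistribSMul.toAddMonoidHom Y a).comp D from
    DFunLike.congr_fun this x
  refine TensorProduct.prod_addMonoidHom_ext fun y r z s => ?_
  simp only [AddMonoidHom.comp_apply, twistShift_tmul, hD, hD', coe_mulLe, coe_mulGe,
    DistribSMul.toAddMonoidHom_apply, smul_sub, smul_smul, mul_comm]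

theorem sum_twistShift_twistShift {ι : Type*} [Fintype ι] {d k l k' l' : ℤ} (hk : k + d ≤ k')
    (hl : -l' ≤ -l + d) (hk' : k' + -d ≤ k) (hl' : -l ≤ -l' + -d) {a b : ι → R}
    (ha : ∀ i, a i ∈ 𝒜 d) (hb : ∀ i, b i ∈ 𝒜 (-d)) (hab : ∑ i, a i * b i = 1)
    (x : TwistedDomain 𝒜 Yneg Ypos k l) :
    ∑ i, twistShift 𝒜 hk' hl' (b i) (hb i) (twistShift 𝒜 hk hl (a i) (ha i) x) = x := by
  suffices ∑ i, (twistShift 𝒜 hk' hl' (b i) (hb i)).comp (twistShift 𝒜 hk hl (a i) (ha i)) =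
      AddMonoidHom.id _ by
    simpa using DFunLike.congr_fun this x
  refine TensorProduct.prod_addMonoidHom_ext fun y r z s => ?_
  have hr : ∑ i, mulLe 𝒜 hk' (b i) (grade_mem_Rle 𝒜 (hb i))
      (mulLe 𝒜 hk (a i) (grade_mem_Rle 𝒜 (ha i)) r) = r := by
    ext; simp [mul_assoc, ← Finset.mul_sum, hab]
  have hs : ∑ i, mulGe 𝒜 hl' (b i) (grade_mem_Rge 𝒜 (hb i))
      (mulGe 𝒜 hl (a i) (grade_mem_Rge 𝒜 (ha i)) s) = s := by
    ext; simp [mul_assoc, ← Finset.mul_sum, hab]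
  simp only [AddMonoidHom.finsetSum_apply, AddMonoidHom.comp_apply, twistShift_tmul,
    AddMonoidHom.id_apply]
  ext <;> simp only [Prod.fst_sum, Prod.snd_sum, ← TensorProduct.tmul_sum, hr, hs]

end TwistedDomain

theorem twistedDifference_transfer {Y : Type*} [AddCommGroup Y] [Module R Y]
    (h : IsStronglyGraded 𝒜) {Yneg Ypos : Type*} [AddCommGroup Yneg] [AddCommGroup Ypos]
    [Module (RleSubring 𝒜) Yneg] [Module (RgeSubring 𝒜) Ypos] (υneg : Yneg → Y)
    (υpos : Ypos → Y) {k l k' l' : ℤ} (hkl : k + l = k' + l')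
    {D : TwistedDomain 𝒜 Yneg Ypos k l →+ Y} {D' : TwistedDomain 𝒜 Yneg Ypos k' l' →+ Y}
    (hD : ∀ y r z s, D (y ⊗ₜ r, z ⊗ₜ s) = (r : R) • υneg y - (s : R) • υpos z)
    (hD' : ∀ y r z s, D' (y ⊗ₜ r, z ⊗ₜ s) = (r : R) • υneg y - (s : R) • υpos z) :
    (Function.Injective D' → Function.Injective D) ∧
      (Function.Surjective D → Function.Surjective D') := by
  obtain ⟨n, a, b, hab⟩ := Submodule.exists_fin_sum_mul_eq_of_mem_mul (h.one_mem_mul_neg (k' - k))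
  have hk : k + (k' - k) ≤ k' := by omega
  have hl : -l' ≤ -l + (k' - k) := by omega
  have hk' : k' + -(k' - k) ≤ k := by omega
  have hl' : -l ≤ -l' + -(k' - k) := by omega
  let φ i := twistShift 𝒜 (Yneg := Yneg) (Ypos := Ypos) hk hl (a i) (a i).2
  have hφ i x : D' (φ i x) = (a i : R) • D x := map_twistShift 𝒜 υneg υpos hk hl (a i).2 hD hD' x
  exact ⟨injective_of_sum_retraction φ (fun i => twistShift 𝒜 hk' hl' (b i) (b i).2) _ hφ
      (sum_twistShift_twistShift 𝒜 hk hl hk' hl' (fun i => (a i).2) (fun i => (b i).2) hab),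
    surjective_of_sum_smul φ _ (fun i => (b i : R)) hφ hab⟩

/-- For `k + ℓ = k' + ℓ'`, the `(k,ℓ)`-twisted difference map
`(Y⁻ ⊗[R_{≤0}] R_{≤k}) × (Y⁺ ⊗[R_{≥0}] R_{≥-ℓ}) → Y⁰`,
`(y ⊗ r, z ⊗ s) ↦ r • υ⁻ y - s • υ⁺ z`, has zero kernel if and only if the
`(k',ℓ')`-twisted difference map does, and is surjective if and only if the
`(k',ℓ')`-twisted difference map is. -/
theorem twisted_difference_ker_surjective_iff (h : IsStronglyGraded 𝒜)
    (Yneg Yzero Ypos : Type u)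
    [AddCommGroup Yneg] [AddCommGroup Yzero] [AddCommGroup Ypos]
    [Module (RleSubring 𝒜) Yneg] [Module R Yzero] [Module (RgeSubring 𝒜) Ypos]
    (υneg : Yneg →ₗ[RleSubring 𝒜] Yzero) (υpos : Ypos →ₗ[RgeSubring 𝒜] Yzero)
    (k l k' l' : ℤ) (hkl : k + l = k' + l')
    (D : ((Yneg ⊗[RleSubring 𝒜] Rle 𝒜 k) × (Ypos ⊗[RgeSubring 𝒜] Rge 𝒜 (-l))) →ₗ[𝒜 0] Yzero)
    (hD : ∀ (y : Yneg) (r : Rle 𝒜 k) (z : Ypos) (s : Rge 𝒜 (-l)),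
      D (y ⊗ₜ r, z ⊗ₜ s) = (r : R) • υneg y - (s : R) • υpos z)
    (D' : ((Yneg ⊗[RleSubring 𝒜] Rle 𝒜 k') × (Ypos ⊗[RgeSubring 𝒜] Rge 𝒜 (-l'))) →ₗ[𝒜 0] Yzero)
    (hD' : ∀ (y : Yneg) (r : Rle 𝒜 k') (z : Ypos) (s : Rge 𝒜 (-l')),
      D' (y ⊗ₜ r, z ⊗ₜ s) = (r : R) • υneg y - (s : R) • υpos z) :
    (LinearMap.ker D = ⊥ ↔ LinearMap.ker D' = ⊥) ∧
    (Function.Surjective D ↔ Function.Surjective D') := by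
  obtain ⟨injective_of_injective', surjective'_of_surjective⟩ :=
    twistedDifference_transfer 𝒜 h υneg υpos hkl (D := D.toAddMonoidHom) (D' := D'.toAddMonoidHom)
      hD hD'
  obtain ⟨injective'_of_injective, surjective_of_surjective'⟩ :=
    twistedDifference_transfer 𝒜 h υneg υpos hkl.symm (D := D'.toAddMonoidHom)
      (D' := D.toAddMonoidHom) hD' hD
  rw [LinearMap.ker_eq_bot, LinearMap.ker_eq_bot]
  exact ⟨⟨injective'_of_injective, injective_of_injective'⟩,
    ⟨surjective'_of_surjective, surjective_of_surjective'⟩⟩
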